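/- arXiv:2503.06078 — 4 statements merged into one kernel-verified Lean document; each statement's English description precedes it below -/
import Mathlib

section
/- Let f_1, ..., f_N : ℝ^d → ℝ be differentiable functions that are each μ-strongly convex (μ > 0) with L-Lipschitz gradients, let F(w) = (1/N)·Σ_{m=1}^N f_m(w) with minimizer w* (so ∇F(w*) = 0), let p_1, ..., p_N be nonnegative weights summing to 1, let F̃(w) = Σ_{m=1}^N p_m f_m(w) with minimizer w̃ (so ∇F̃(w̃) = 0), and set κ² = (1/N)·Σ_{m=1}^N ‖∇f_m(w*)‖² and D = 2·max_{m} (1/μ)‖∇f_m(0)‖. Let η ≥ 0 with η·μ ≤ 1, let ζ ≥ 0, and let (W_t)_{t≥0} be a sequence of square-integrable ℝ^d-valued random vectors on a probability space such that 𝔼[‖W_0 − w̃‖²] ≤ D² and, for every t ≥ 0, 𝔼[‖W_{t+1} − w̃‖²] ≤ (1 − ημ)²·𝔼[‖W_t − w̃‖²] + η²ζ. Then for every t ≥ 0, 𝔼[‖W_t − w*‖²] ≤ 2·D²·(1 − ημ)^{2t} + 2·(N·κ²/μ²)·Σ_{m=1}^N (1/N − p_m)² + 2·(η/μ)·ζ.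 -/
/-!
Strong convexity makes each gradient strongly monotone, so testing the two stationarity conditions
`∑ ∇fₘ(w*) = 0` and `∑ pₘ ∇fₘ(w̃) = 0` against `w* - w̃` gives
`μ ‖w* - w̃‖ ≤ ‖∑ pₘ ∇fₘ(w*)‖ = ‖∑ (1/N - pₘ) ∇fₘ(w*)‖`, and Cauchy–Schwarz bounds the right side by
the model-bias term. Unrolling the recursion, whose noise level `η ζ / μ` is a supersolution, bounds
`𝔼‖W_t - w̃‖²`, and `‖x - w*‖² ≤ 2‖x - w̃‖² + 2‖w̃ - w*‖²` combines the two.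
-/

open MeasureTheory Finset
open scoped RealInnerProductSpace

theorem le_mul_pow_add_of_le_mul_add {a : ℕ → ℝ} {A r b c : ℝ} (hr : 0 ≤ r)
    (hc : r * c + b ≤ c) (h0 : a 0 ≤ A + c) (hstep : ∀ t, a (t + 1) ≤ r * a t + b) :
    ∀ t, a t ≤ A * r ^ t + c
  | 0 => by simpa using h0
  | t + 1 => calc
      a (t + 1) ≤ r * a t + b := hstep t
      _ ≤ r * (A * r ^ t + c) + b := by gcongr; exact le_mul_pow_add_of_le_mul_add hr hc h0 hstep t
      _ = A * r ^ (t + 1) + (r * c + b) := by ring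
      _ ≤ A * r ^ (t + 1) + c := by gcongr

theorem integral_norm_sub_sq_le {E Ω : Type*} [NormedAddCommGroup E] [MeasurableSpace Ω]
    {P : Measure Ω} [IsProbabilityMeasure P] {X : Ω → E} (hX : MemLp X 2 P) (a b : E) :
    ∫ ω, ‖X ω - a‖ ^ 2 ∂P ≤ 2 * ∫ ω, ‖X ω - b‖ ^ 2 ∂P + 2 * ‖a - b‖ ^ 2 := by
  have hint : ∀ c, Integrable (fun ω => ‖X ω - c‖ ^ 2) P := fun c =>
    (hX.sub (memLp_const c)).norm.integrable_sq
  have hpt : ∀ ω, ‖X ω - a‖ ^ 2 ≤ 2 * (‖X ω - b‖ ^ 2 + ‖a - b‖ ^ 2) := fun ω => calc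
    ‖X ω - a‖ ^ 2 ≤ (‖X ω - b‖ + ‖a - b‖) ^ 2 := by
      gcongr; simpa [norm_sub_rev a b] using norm_sub_le_norm_sub_add_norm_sub (X ω) b a
    _ ≤ 2 * (‖X ω - b‖ ^ 2 + ‖a - b‖ ^ 2) := add_sq_le
  calc ∫ ω, ‖X ω - a‖ ^ 2 ∂P ≤ ∫ ω, 2 * (‖X ω - b‖ ^ 2 + ‖a - b‖ ^ 2) ∂P :=
        integral_mono (hint a) (((hint b).add (integrable_const _)).const_mul 2) hpt
    _ = 2 * ∫ ω, ‖X ω - b‖ ^ 2 ∂P + 2 * ‖a - b‖ ^ 2 := by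
        rw [integral_const_mul, integral_add (hint b) (integrable_const _), integral_const]
        simp only [probReal_univ, one_smul]; ring

theorem norm_sum_smul_sq_le {E ι : Type*} [SeminormedAddCommGroup E] [NormedSpace ℝ E]
    (s : Finset ι) (c : ι → ℝ) (v : ι → E) :
    ‖∑ m ∈ s, c m • v m‖ ^ 2 ≤ (∑ m ∈ s, c m ^ 2) * ∑ m ∈ s, ‖v m‖ ^ 2 := calc
  ‖∑ m ∈ s, c m • v m‖ ^ 2 ≤ (∑ m ∈ s, |c m| * ‖v m‖) ^ 2 := by
      gcongr
      exact (norm_sum_le _ _).trans_eq (by simp only [norm_smul, Real.norm_eq_abs])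
  _ ≤ (∑ m ∈ s, |c m| ^ 2) * ∑ m ∈ s, ‖v m‖ ^ 2 := sum_mul_sq_le_sq_mul_sq _ _ _
  _ = (∑ m ∈ s, c m ^ 2) * ∑ m ∈ s, ‖v m‖ ^ 2 := by simp only [sq_abs]

section InnerProductSpace

variable {E ι : Type*} [NormedAddCommGroup E] [InnerProductSpace ℝ E]

theorem hasGradientAt_sum_mul [CompleteSpace E] (s : Finset ι) (c : ι → ℝ) {f : ι → E → ℝ}
    {x : E} (hf : ∀ m ∈ s, DifferentiableAt ℝ (f m) x) :
    HasGradientAt (fun w => ∑ m ∈ s, c m * f m w) (∑ m ∈ s, c m • gradient (f m) x) x := by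
  rw [hasGradientAt_iff_hasFDerivAt, map_sum]
  exact HasFDerivAt.fun_sum fun m hm => by
    simpa using (hf m hm).hasGradientAt.hasFDerivAt.const_mul (c m)

theorem mul_norm_sub_sq_le_inner_gradient_sub [CompleteSpace E] {f : E → ℝ} {μ : ℝ}
    (hsc : ∀ x y, f x + ⟪gradient f x, y - x⟫ + μ / 2 * ‖y - x‖ ^ 2 ≤ f y) (x y : E) :
    μ * ‖x - y‖ ^ 2 ≤ ⟪gradient f x - gradient f y, x - y⟫ := by
  have hxy := hsc x y
  have hyx := hsc y x
  rw [← neg_sub x y, inner_neg_right, norm_neg] at hxy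
  rw [inner_sub_left]
  linarith

variable {s : Finset ι} {g : ι → E → E} {μ : ℝ} {p : ι → ℝ}

theorem mul_norm_sub_le_norm_sum_smul
    (hg : ∀ m ∈ s, ∀ x y, μ * ‖x - y‖ ^ 2 ≤ ⟪g m x - g m y, x - y⟫)
    (hp : ∀ m ∈ s, 0 ≤ p m) (hpsum : ∑ m ∈ s, p m = 1)
    {a b : E} (hb : ∑ m ∈ s, p m • g m b = 0) :
    μ * ‖a - b‖ ≤ ‖∑ m ∈ s, p m • g m a‖ := by
  set G := ∑ m ∈ s, p m • g m a
  have hinner : μ * ‖a - b‖ ^ 2 ≤ ⟪G, a - b⟫ := calc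
    μ * ‖a - b‖ ^ 2 = ∑ m ∈ s, p m * (μ * ‖a - b‖ ^ 2) := by rw [← sum_mul, hpsum, one_mul]
    _ ≤ ∑ m ∈ s, p m * ⟪g m a - g m b, a - b⟫ :=
        sum_le_sum fun m hm => mul_le_mul_of_nonneg_left (hg m hm a b) (hp m hm)
    _ = ⟪G - ∑ m ∈ s, p m • g m b, a - b⟫ := by
        simp only [G, ← sum_sub_distrib, ← smul_sub, sum_inner, real_inner_smul_left]
    _ = ⟪G, a - b⟫ := by rw [hb, sub_zero]
  rcases (norm_nonneg (a - b)).eq_or_lt with h0 | hpos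
  · rw [← h0, mul_zero]; exact norm_nonneg G
  · refine le_of_mul_le_mul_right ?_ hpos
    calc μ * ‖a - b‖ * ‖a - b‖ = μ * ‖a - b‖ ^ 2 := by ring
      _ ≤ ‖G‖ * ‖a - b‖ := hinner.trans (real_inner_le_norm G (a - b))

theorem norm_sub_sq_le_of_sum_eq_zero_of_sum_smul_eq_zero (hμ : 0 < μ)
    (hg : ∀ m ∈ s, ∀ x y, μ * ‖x - y‖ ^ 2 ≤ ⟪g m x - g m y, x - y⟫)
    (hp : ∀ m ∈ s, 0 ≤ p m) (hpsum : ∑ m ∈ s, p m = 1)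
    {a b : E} (ha : ∑ m ∈ s, g m a = 0) (hb : ∑ m ∈ s, p m • g m b = 0) (q : ℝ) :
    ‖a - b‖ ^ 2 ≤ (∑ m ∈ s, ‖g m a‖ ^ 2) / μ ^ 2 * ∑ m ∈ s, (q - p m) ^ 2 := by
  have hG : ∑ m ∈ s, p m • g m a = -∑ m ∈ s, (q - p m) • g m a := by
    simp only [sub_smul, sum_sub_distrib, ← smul_sum, ha, smul_zero, zero_sub, neg_neg]
  rw [div_mul_eq_mul_div, le_div_iff₀ (by positivity)]
  calc ‖a - b‖ ^ 2 * μ ^ 2 = (μ * ‖a - b‖) ^ 2 := by ring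
    _ ≤ ‖∑ m ∈ s, p m • g m a‖ ^ 2 := by
        gcongr
        exact mul_norm_sub_le_norm_sum_smul hg hp hpsum hb
    _ ≤ (∑ m ∈ s, (q - p m) ^ 2) * ∑ m ∈ s, ‖g m a‖ ^ 2 := by
        rw [hG, norm_neg]; exact norm_sum_smul_sq_le s _ _
    _ = (∑ m ∈ s, ‖g m a‖ ^ 2) * ∑ m ∈ s, (q - p m) ^ 2 := mul_comm _ _

end InnerProductSpace

theorem biased_FL_optimality_error_general
    {d N : ℕ} [NeZero N]
    (f : Fin N → EuclideanSpace ℝ (Fin d) → ℝ)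
    (μ : ℝ) (hμ : 0 < μ)
    (hdiff : ∀ m x, DifferentiableAt ℝ (f m) x)
    (hsc : ∀ m (x y : EuclideanSpace ℝ (Fin d)),
      f m y ≥ f m x + ⟪gradient (f m) x, y - x⟫ + μ / 2 * ‖y - x‖ ^ 2)
    (F : EuclideanSpace ℝ (Fin d) → ℝ)
    (hF : F = fun w => (1 / N : ℝ) * ∑ m, f m w)
    (wstar : EuclideanSpace ℝ (Fin d)) (hwstar : gradient F wstar = 0)
    (p : Fin N → ℝ) (hp : ∀ m, 0 ≤ p m) (hpsum : ∑ m, p m = 1)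
    (Ftil : EuclideanSpace ℝ (Fin d) → ℝ)
    (hFtil : Ftil = fun w => ∑ m, p m * f m w)
    (wtil : EuclideanSpace ℝ (Fin d)) (hwtil : gradient Ftil wtil = 0)
    (κsq D : ℝ)
    (hκ : κsq = (1 / N : ℝ) * ∑ m, ‖gradient (f m) wstar‖ ^ 2)
    (η ζ : ℝ) (hη : 0 ≤ η) (hημ : η * μ ≤ 1) (hζ : 0 ≤ ζ)
    {Ω : Type*} [MeasurableSpace Ω] (P : Measure Ω) [IsProbabilityMeasure P]
    (W : ℕ → Ω → EuclideanSpace ℝ (Fin d))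
    (hWL2 : ∀ t, MemLp (W t) 2 P)
    (hW0 : ∫ ω, ‖W 0 ω - wtil‖ ^ 2 ∂P ≤ D ^ 2)
    (hrec : ∀ t, ∫ ω, ‖W (t + 1) ω - wtil‖ ^ 2 ∂P ≤
      (1 - η * μ) ^ 2 * ∫ ω, ‖W t ω - wtil‖ ^ 2 ∂P + η ^ 2 * ζ) :
    ∀ t, ∫ ω, ‖W t ω - wstar‖ ^ 2 ∂P ≤
      2 * D ^ 2 * (1 - η * μ) ^ (2 * t)
        + 2 * (N * κsq / μ ^ 2) * ∑ m, (1 / N - p m) ^ 2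
        + 2 * (η / μ) * ζ := by
  have hstar : ∑ m, gradient (f m) wstar = 0 := by
    have h := hasGradientAt_sum_mul univ (fun _ => (1 / N : ℝ)) fun m _ => hdiff m wstar
    simp only [← mul_sum, ← smul_sum, ← hF] at h
    simpa [h.gradient, NeZero.ne N] using hwstar
  have htil : ∑ m, p m • gradient (f m) wtil = 0 := by
    rw [← hwtil, hFtil, (hasGradientAt_sum_mul univ p fun m _ => hdiff m wtil).gradient]
  have hκN : ∑ m, ‖gradient (f m) wstar‖ ^ 2 = N * κsq := by
    rw [hκ, one_div, mul_inv_cancel_left₀ (Nat.cast_ne_zero.2 (NeZero.ne N))]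
  have hbias := norm_sub_sq_le_of_sum_eq_zero_of_sum_smul_eq_zero hμ
    (fun m _ => mul_norm_sub_sq_le_inner_gradient_sub (hsc m)) (fun m _ => hp m) hpsum
    hstar htil (1 / N)
  rw [hκN] at hbias
  have hfix : (1 - η * μ) ^ 2 * (η / μ * ζ) + η ^ 2 * ζ ≤ η / μ * ζ := by
    have h : (1 - η * μ) ^ 2 * (η / μ * ζ) + η ^ 2 * ζ = η / μ * ζ - η ^ 2 * ζ * (1 - η * μ) := by
      field_simp; ring
    linarith [mul_nonneg (mul_nonneg (sq_nonneg η) hζ) (sub_nonneg.2 hημ)]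
  have hdist := le_mul_pow_add_of_le_mul_add (a := fun t => ∫ ω, ‖W t ω - wtil‖ ^ 2 ∂P)
    (sq_nonneg _) hfix (le_add_of_le_of_nonneg hW0 (by positivity)) hrec
  intro t
  calc ∫ ω, ‖W t ω - wstar‖ ^ 2 ∂P
      ≤ 2 * ∫ ω, ‖W t ω - wtil‖ ^ 2 ∂P + 2 * ‖wstar - wtil‖ ^ 2 :=
        integral_norm_sub_sq_le (hWL2 t) wstar wtil
    _ ≤ 2 * (D ^ 2 * ((1 - η * μ) ^ 2) ^ t + η / μ * ζ)
        + 2 * (N * κsq / μ ^ 2 * ∑ m, (1 / N - p m) ^ 2) := by linarith [hdist t, hbias]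
    _ = _ := by rw [← pow_mul]; ring

/-- Convergence bound for biased wireless FL (Theorem 1):
optimality error ≤ initialization error + model bias + gradient estimation variance. -/
theorem biased_FL_optimality_error
    {d N : ℕ} [NeZero N]
    (f : Fin N → EuclideanSpace ℝ (Fin d) → ℝ)
    (μ L : ℝ) (hμ : 0 < μ)
    (hdiff : ∀ m x, DifferentiableAt ℝ (f m) x)
    (hsc : ∀ m (x y : EuclideanSpace ℝ (Fin d)),
      f m y ≥ f m x + ⟪gradient (f m) x, y - x⟫ + μ / 2 * ‖y - x‖ ^ 2)
    (hsmooth : ∀ m (x y : EuclideanSpace ℝ (Fin d)),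
      ‖gradient (f m) x - gradient (f m) y‖ ≤ L * ‖x - y‖)
    (F : EuclideanSpace ℝ (Fin d) → ℝ)
    (hF : F = fun w => (1 / N : ℝ) * ∑ m, f m w)
    (wstar : EuclideanSpace ℝ (Fin d)) (hwstar : gradient F wstar = 0)
    (p : Fin N → ℝ) (hp : ∀ m, 0 ≤ p m) (hpsum : ∑ m, p m = 1)
    (Ftil : EuclideanSpace ℝ (Fin d) → ℝ)
    (hFtil : Ftil = fun w => ∑ m, p m * f m w)
    (wtil : EuclideanSpace ℝ (Fin d)) (hwtil : gradient Ftil wtil = 0)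
    (κsq D : ℝ)
    (hκ : κsq = (1 / N : ℝ) * ∑ m, ‖gradient (f m) wstar‖ ^ 2)
    (hD : D = 2 * Finset.univ.sup' Finset.univ_nonempty
      (fun m => 1 / μ * ‖gradient (f m) 0‖))
    (η ζ : ℝ) (hη : 0 ≤ η) (hημ : η * μ ≤ 1) (hζ : 0 ≤ ζ)
    {Ω : Type*} [MeasurableSpace Ω] (P : Measure Ω) [IsProbabilityMeasure P]
    (W : ℕ → Ω → EuclideanSpace ℝ (Fin d))
    (hWL2 : ∀ t, MemLp (W t) 2 P)
    (hW0 : ∫ ω, ‖W 0 ω - wtil‖ ^ 2 ∂P ≤ D ^ 2)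
    (hrec : ∀ t, ∫ ω, ‖W (t + 1) ω - wtil‖ ^ 2 ∂P ≤
      (1 - η * μ) ^ 2 * ∫ ω, ‖W t ω - wtil‖ ^ 2 ∂P + η ^ 2 * ζ) :
    ∀ t, ∫ ω, ‖W t ω - wstar‖ ^ 2 ∂P ≤
      2 * D ^ 2 * (1 - η * μ) ^ (2 * t)
        + 2 * (N * κsq / μ ^ 2) * ∑ m, (1 / N - p m) ^ 2
        + 2 * (η / μ) * ζ :=
  biased_FL_optimality_error_general f μ hμ hdiff hsc F hF wstar hwstar p hp hpsum Ftil hFtil wtil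
    hwtil κsq D hκ η ζ hη hημ hζ P W hWL2 hW0 hrec
end

section
/- (OTA-FL gradient estimation variance bound.) Fix w ∈ ℝ^d, differentiable functions f_1, ..., f_N : ℝ^d → ℝ, real constants G > 0, N₀ > 0, γ_1, ..., γ_N > 0, and q_1, ..., q_N ∈ (0, 1]. On a probability space, let χ_1, ..., χ_N be {0,1}-valued Bernoulli random variables with P(χ_m = 1) = q_m, let g_1, ..., g_N be ℝ^d-valued random vectors satisfying ‖g_m‖ ≤ G almost surely, 𝔼[g_m] = ∇f_m(w), and 𝔼[‖g_m − ∇f_m(w)‖²] ≤ σ_m², and let z be an ℝ^d-valued random vector with 𝔼[z] = 0 and 𝔼[‖z‖²] = d·N₀. Suppose the family of 2N+1 random elements {χ_1, ..., χ_N, g_1, ..., g_N, z} is mutually independent. Define α_m = q_m·γ_m, α = Σ_{m=1}^N α_m, p_m = α_m/α, and ĝ = (1/α)·Σ_{m=1}^N χ_m·γ_m·g_m + z/α. Then 𝔼[‖ĝ − Σ_{m=1}^N p_m·∇f_m(w)‖²] ≤ Σ_{m=1}^N p_m²·G²·(γ_m/α_m − 1) + Σ_{m=1}^N p_m²·σ_m²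 + d·N₀/α². -/
open MeasureTheory ProbabilityTheory
open scoped BigOperators

/-!
Write `ḡ_m = 𝔼[g_m] = ∇f_m(w)`. Since `p_m = q_m γ_m / α`,
`ĝ - ∑ p_m ḡ_m = α⁻¹ (∑_m γ_m (χ_m g_m - q_m ḡ_m) + z)`, a sum of independent centred terms, so
its second moment is the sum of theirs. For a `{0,1}`-valued `χ` with mean `q` independent of `g`,
`χ² = χ` gives `𝔼‖χ g - q ḡ‖² = q 𝔼‖g‖² - q² ‖ḡ‖² = q² 𝔼‖g - ḡ‖² + q (1 - q) 𝔼‖g‖²`,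
which is at most `q² σ² + q (1 - q) G²`; scaling by `γ² / α²` gives the two device sums, and the
noise contributes `d N₀ / α²`.
-/

/-- The index type for the family `{χ_1, ..., χ_N, g_1, ..., g_N, z}` of `2N+1`
random elements in the OTA-FL scheme. -/
abbrev otaIndex (N : ℕ) : Type := Fin N ⊕ (Fin N ⊕ Unit)

/-- Codomain types of the family: the `χ_m` are real-valued, the `g_m` and `z`
are `ℝ^d`-valued. -/
abbrev otaType (d N : ℕ) : otaIndex N → Type :=
  Sum.elim (fun _ => ℝ)
    (Sum.elim (fun _ => EuclideanSpace ℝ (Fin d)) (fun _ => EuclideanSpace ℝ (Fin d)))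

/-- The canonical measurable-space structure on each codomain. -/
def otaMS (d N : ℕ) : ∀ i : otaIndex N, MeasurableSpace (otaType d N i)
  | .inl _ => inferInstanceAs (MeasurableSpace ℝ)
  | .inr (.inl _) => inferInstanceAs (MeasurableSpace (EuclideanSpace ℝ (Fin d)))
  | .inr (.inr _) => inferInstanceAs (MeasurableSpace (EuclideanSpace ℝ (Fin d)))

/-- The family `{χ_1, ..., χ_N, g_1, ..., g_N, z}` as a single indexed family. -/
def otaFamily {Ω : Type*} {d N : ℕ} (χ : Fin N → Ω → ℝ)
    (g : Fin N → Ω → EuclideanSpace ℝ (Fin d)) (z : Ω → EuclideanSpace ℝ (Fin d)) :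
    ∀ i : otaIndex N, Ω → otaType d N i
  | .inl m => χ m
  | .inr (.inl m) => g m
  | .inr (.inr _) => z

lemma integral_norm_sq_le_sq_of_ae_norm_le {Ω E : Type*} [MeasurableSpace Ω] {μ : Measure Ω}
    [IsProbabilityMeasure μ] [NormedAddCommGroup E] {X : Ω → E} {C : ℝ} (hX : ∀ᵐ ω ∂μ, ‖X ω‖ ≤ C) :
    ∫ ω, ‖X ω‖ ^ 2 ∂μ ≤ C ^ 2 := by
  calc ∫ ω, ‖X ω‖ ^ 2 ∂μ ≤ ∫ _, C ^ 2 ∂μ :=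
        integral_mono_of_nonneg (ae_of_all _ fun ω => by positivity) (integrable_const _) <| by
          filter_upwards [hX] with ω hω
          gcongr
    _ = C ^ 2 := by simp

section SecondMoment

variable {Ω E : Type*} [MeasurableSpace Ω] {μ : Measure Ω}
  [NormedAddCommGroup E] [InnerProductSpace ℝ E] [CompleteSpace E]

lemma integral_norm_sub_integral_sq [IsProbabilityMeasure μ] {X : Ω → E} (hX : MemLp X 2 μ) :
    ∫ ω, ‖X ω - μ[X]‖ ^ 2 ∂μ = ∫ ω, ‖X ω‖ ^ 2 ∂μ - ‖μ[X]‖ ^ 2 := by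
  have hXi : Integrable X μ := hX.integrable one_le_two
  have hsq : Integrable (fun ω => ‖X ω‖ ^ 2) μ := hX.integrable_norm_pow two_ne_zero
  have hinner : Integrable (fun ω => 2 * inner ℝ (μ[X]) (X ω)) μ :=
    (hXi.const_inner _).const_mul 2
  have hexp (ω : Ω) :
      ‖X ω - μ[X]‖ ^ 2 = ‖X ω‖ ^ 2 - 2 * inner ℝ (μ[X]) (X ω) + ‖μ[X]‖ ^ 2 := by
    rw [norm_sub_sq_real, real_inner_comm]
  have hdiff : Integrable (fun ω => ‖X ω‖ ^ 2 - 2 * inner ℝ (μ[X]) (X ω)) μ := hsq.sub hinner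
  simp_rw [hexp]
  rw [integral_add hdiff (integrable_const _), integral_sub hsq hinner,
    integral_const_mul, integral_inner hXi, real_inner_self_eq_norm_sq]
  simp
  ring

variable [MeasurableSpace E] [BorelSpace E]

lemma integral_norm_sq_sum_of_pairwise_indepFun [IsFiniteMeasure μ] {ι : Type*} [Fintype ι]
    {W : ι → Ω → E} (hW : ∀ i, MemLp (W i) 2 μ) (hmean : ∀ i, μ[W i] = 0)
    (hindep : Pairwise fun i j => W i ⟂ᵢ[μ] W j) :
    ∫ ω, ‖∑ i, W i ω‖ ^ 2 ∂μ = ∑ i, ∫ ω, ‖W i ω‖ ^ 2 ∂μ := by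
  have hinner_int (i j : ι) : Integrable (fun ω => inner ℝ (W i ω) (W j ω)) μ := by
    rcases eq_or_ne i j with rfl | hij
    · simpa only [real_inner_self_eq_norm_sq] using (hW i).integrable_norm_pow two_ne_zero
    · exact (hindep hij).integrable_bilin ((hW i).integrable one_le_two)
        ((hW j).integrable one_le_two) (innerSL ℝ)
  have hcross {i j : ι} (hij : i ≠ j) : ∫ ω, inner ℝ (W i ω) (W j ω) ∂μ = 0 := by
    have := (hindep hij).integral_bilin
      ((hW i).integrable one_le_two) ((hW j).integrable one_le_two) (innerSL ℝ)
    rwa [hmean i, map_zero, zero_apply] at this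
  calc ∫ ω, ‖∑ i, W i ω‖ ^ 2 ∂μ
      = ∫ ω, ∑ i, ∑ j, inner ℝ (W i ω) (W j ω) ∂μ := by
        simp_rw [← real_inner_self_eq_norm_sq, sum_inner, inner_sum]
    _ = ∑ i, ∑ j, ∫ ω, inner ℝ (W i ω) (W j ω) ∂μ := by
        rw [integral_finsetSum _ fun i _ => integrable_finsetSum _ fun j _ => hinner_int i j]
        exact Finset.sum_congr rfl fun i _ => integral_finsetSum _ fun j _ => hinner_int i j
    _ = ∑ i, ∫ ω, ‖W i ω‖ ^ 2 ∂μ := by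
        refine Finset.sum_congr rfl fun i _ => ?_
        rw [Finset.sum_eq_single i (fun j _ hji => hcross hji.symm) (by simp)]
        simp_rw [real_inner_self_eq_norm_sq]

end SecondMoment

section BernoulliSelection

variable {Ω E : Type*} [MeasurableSpace Ω] {μ : Measure Ω} {χ : Ω → ℝ}

lemma integral_eq_measureReal_of_ae_eq_zero_or_one (hχ : Measurable χ)
    (hval : ∀ᵐ ω ∂μ, χ ω = 0 ∨ χ ω = 1) :
    ∫ ω, χ ω ∂μ = μ.real {ω | χ ω = 1} := by
  have heq : χ =ᵐ[μ] {ω | χ ω = 1}.indicator 1 := by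
    filter_upwards [hval] with ω hω
    rcases hω with h | h <;> simp [Set.indicator, h]
  rw [integral_congr_ae heq]
  exact integral_indicator_one (hχ (measurableSet_singleton 1))

lemma MeasureTheory.MemLp.smul_of_ae_eq_zero_or_one [NormedAddCommGroup E] [NormedSpace ℝ E]
    {p : ENNReal} {X : Ω → E} (hX : MemLp X p μ) (hχ : AEStronglyMeasurable χ μ)
    (hval : ∀ᵐ ω ∂μ, χ ω = 0 ∨ χ ω = 1) :
    MemLp (fun ω => χ ω • X ω) p μ :=
  hX.of_le (hχ.smul hX.1) <| by
    filter_upwards [hval] with ω hω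
    rcases hω with h | h <;> simp [h]

variable [IsProbabilityMeasure μ] [NormedAddCommGroup E] [InnerProductSpace ℝ E] [CompleteSpace E]
  [MeasurableSpace E] [BorelSpace E] {X : Ω → E} {q : ℝ}

lemma integral_smul_sub_eq_zero_of_indepFun (hχ : AEStronglyMeasurable χ μ)
    (hval : ∀ᵐ ω ∂μ, χ ω = 0 ∨ χ ω = 1) (hq : μ[χ] = q) (hX : Integrable X μ)
    (hindep : χ ⟂ᵢ[μ] X) :
    ∫ ω, (χ ω • X ω - q • μ[X]) ∂μ = 0 := by
  have hint : Integrable (fun ω => χ ω • X ω) μ := by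
    rw [← memLp_one_iff_integrable] at hX ⊢
    exact hX.smul_of_ae_eq_zero_or_one hχ hval
  rw [integral_sub hint (integrable_const _),
    hindep.integral_fun_smul_eq_smul_integral hχ hX.1, hq]
  simp

lemma integral_norm_smul_sub_sq_of_indepFun (hχ : AEStronglyMeasurable χ μ)
    (hval : ∀ᵐ ω ∂μ, χ ω = 0 ∨ χ ω = 1) (hq : μ[χ] = q) (hX : MemLp X 2 μ)
    (hindep : χ ⟂ᵢ[μ] X) :
    ∫ ω, ‖χ ω • X ω - q • μ[X]‖ ^ 2 ∂μ
      = q ^ 2 * ∫ ω, ‖X ω - μ[X]‖ ^ 2 ∂μ + q * (1 - q) * ∫ ω, ‖X ω‖ ^ 2 ∂μ := by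
  have hmean : ∫ ω, χ ω • X ω ∂μ = q • μ[X] := by
    rw [hindep.integral_fun_smul_eq_smul_integral hχ hX.1, hq]
  have hnorm_sq : ∫ ω, ‖χ ω • X ω‖ ^ 2 ∂μ = q * ∫ ω, ‖X ω‖ ^ 2 ∂μ := by
    have hae : (fun ω => ‖χ ω • X ω‖ ^ 2) =ᵐ[μ] fun ω => χ ω * ‖X ω‖ ^ 2 := by
      filter_upwards [hval] with ω hω
      rcases hω with h | h <;> simp [h]
    rw [integral_congr_ae hae, ← hq]
    exact (hindep.comp measurable_id (measurable_norm.pow_const 2)).integral_fun_mul_eq_mul_integral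
      hχ (hX.1.norm.pow 2)
  rw [← hmean, integral_norm_sub_integral_sq (hX.smul_of_ae_eq_zero_or_one hχ hval),
    integral_norm_sub_integral_sq hX, hnorm_sq, hmean, norm_smul, Real.norm_eq_abs, mul_pow,
    sq_abs]
  ring

lemma integral_norm_smul_sub_sq_le_of_indepFun (hχ : AEStronglyMeasurable χ μ)
    (hval : ∀ᵐ ω ∂μ, χ ω = 0 ∨ χ ω = 1) (hq : μ[χ] = q) (hq0 : 0 ≤ q) (hq1 : q ≤ 1)
    (hX : MemLp X 2 μ) (hindep : χ ⟂ᵢ[μ] X) {s C : ℝ} (hvar : ∫ ω, ‖X ω - μ[X]‖ ^ 2 ∂μ ≤ s)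
    (hbdd : ∀ᵐ ω ∂μ, ‖X ω‖ ≤ C) :
    ∫ ω, ‖χ ω • X ω - q • μ[X]‖ ^ 2 ∂μ ≤ q ^ 2 * s + q * (1 - q) * C ^ 2 := by
  have hq01 : 0 ≤ q * (1 - q) := mul_nonneg hq0 (sub_nonneg.2 hq1)
  have hsq := integral_norm_sq_le_sq_of_ae_norm_le hbdd
  rw [integral_norm_smul_sub_sq_of_indepFun hχ hval hq hX hindep]
  gcongr

end BernoulliSelection

section OTA

variable {Ω : Type*} [MeasurableSpace Ω] {P : Measure Ω} {d N : ℕ} {χ : Fin N → Ω → ℝ}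
  {g : Fin N → Ω → EuclideanSpace ℝ (Fin d)} {z : Ω → EuclideanSpace ℝ (Fin d)}

lemma indepFun_of_iIndepFun_otaFamily (hindep : iIndepFun (m := otaMS d N) (otaFamily χ g z) P)
    (m : Fin N) : χ m ⟂ᵢ[P] g m :=
  hindep.indepFun (i := .inl m) (j := .inr (.inl m)) (by simp)

lemma pairwise_indepFun_of_iIndepFun_otaFamily
    (hindep : iIndepFun (m := otaMS d N) (otaFamily χ g z) P)
    (hχ : ∀ m, AEMeasurable (χ m) P) (hg : ∀ m, AEMeasurable (g m) P) (hz : AEMeasurable z P)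
    {φ : Fin N → ℝ × EuclideanSpace ℝ (Fin d) → EuclideanSpace ℝ (Fin d)}
    (hφ : ∀ m, Measurable (φ m)) :
    Pairwise fun i j : Fin N ⊕ Unit => Sum.elim (fun m ω => φ m (χ m ω, g m ω)) (fun _ => z) i
      ⟂ᵢ[P] Sum.elim (fun m ω => φ m (χ m ω, g m ω)) (fun _ => z) j := by
  have hmeas : ∀ i, @AEMeasurable _ _ (otaMS d N i) _ (otaFamily χ g z i) P := by
    rintro (m | m | u)
    exacts [hχ m, hg m, hz]
  rintro (m | u) (m' | u') hne
  · have hmm' : m ≠ m' := fun h => hne (congrArg Sum.inl h)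
    exact (hindep.indepFun_prodMk_prodMk₀ hmeas (.inl m) (.inr (.inl m)) (.inl m')
      (.inr (.inl m')) (by simpa) (by simp) (by simp) (by simpa)).comp (hφ m) (hφ m')
  · exact (hindep.indepFun_prodMk₀ hmeas (.inl m) (.inr (.inl m)) (.inr (.inr ()))
      (by simp) (by simp)).comp (hφ m) measurable_id
  · exact ((hindep.indepFun_prodMk₀ hmeas (.inl m') (.inr (.inl m')) (.inr (.inr ()))
      (by simp) (by simp)).comp (hφ m') measurable_id).symm
  · exact absurd rfl hne

lemma integral_norm_sq_aggregate_of_iIndepFun_otaFamily [IsProbabilityMeasure P]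
    (hindep : iIndepFun (m := otaMS d N) (otaFamily χ g z) P)
    (hχ : ∀ m, AEMeasurable (χ m) P) (hval : ∀ m, ∀ᵐ ω ∂P, χ m ω = 0 ∨ χ m ω = 1)
    {q : Fin N → ℝ} (hq : ∀ m, P[χ m] = q m) (hg : ∀ m, MemLp (g m) 2 P)
    (hz : MemLp z 2 P) (hzmean : P[z] = 0) (γ : Fin N → ℝ) :
    ∫ ω, ‖∑ m, γ m • (χ m ω • g m ω - q m • P[g m]) + z ω‖ ^ 2 ∂P
      = ∑ m, γ m ^ 2 * ∫ ω, ‖χ m ω • g m ω - q m • P[g m]‖ ^ 2 ∂P + ∫ ω, ‖z ω‖ ^ 2 ∂P := by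
  set φ : Fin N → ℝ × EuclideanSpace ℝ (Fin d) → EuclideanSpace ℝ (Fin d) :=
    fun m x => γ m • (x.1 • x.2 - q m • P[g m]) with hφ
  set W : Fin N ⊕ Unit → Ω → EuclideanSpace ℝ (Fin d) :=
    Sum.elim (fun m ω => φ m (χ m ω, g m ω)) (fun _ => z) with hW
  have hWL2 : ∀ i, MemLp (W i) 2 P := by
    rintro (m | u)
    · exact (((hg m).smul_of_ae_eq_zero_or_one (hχ m).aestronglyMeasurable (hval m)).sub
        (memLp_const _)).const_smul (γ m)
    · exact hz
  have hWmean : ∀ i, P[W i] = 0 := by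
    rintro (m | u)
    · rw [hW, Sum.elim_inl, hφ, integral_smul, integral_smul_sub_eq_zero_of_indepFun
        (hχ m).aestronglyMeasurable (hval m) (hq m) ((hg m).integrable one_le_two)
        (indepFun_of_iIndepFun_otaFamily hindep m), smul_zero]
    · exact hzmean
  have hWindep : Pairwise fun i j => W i ⟂ᵢ[P] W j :=
    pairwise_indepFun_of_iIndepFun_otaFamily hindep hχ (fun m => (hg m).1.aemeasurable)
      hz.1.aemeasurable (fun m => by fun_prop)
  have hsum (ω : Ω) : ∑ m, γ m • (χ m ω • g m ω - q m • P[g m]) + z ω = ∑ i, W i ω := by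
    simp [hW, hφ, Fintype.sum_sum_type]
  simp_rw [hsum]
  rw [integral_norm_sq_sum_of_pairwise_indepFun hWL2 hWmean hWindep, Fintype.sum_sum_type]
  simp only [hW, hφ, Sum.elim_inl, Sum.elim_inr, norm_smul, mul_pow, Real.norm_eq_abs, sq_abs,
    integral_const_mul, Finset.univ_unique, Finset.sum_singleton]

end OTA

theorem ota_fl_variance_bound_general
    {d N : ℕ}
    (w : EuclideanSpace ℝ (Fin d))
    (f : Fin N → EuclideanSpace ℝ (Fin d) → ℝ)
    (G N₀ : ℝ)
    (γ : Fin N → ℝ) (hγ : ∀ m, 0 < γ m)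
    (q : Fin N → ℝ) (hq : ∀ m, q m ∈ Set.Ioc (0 : ℝ) 1)
    (σ : Fin N → ℝ)
    {Ω : Type*} [MeasurableSpace Ω] (P : Measure Ω) [IsProbabilityMeasure P]
    (χ : Fin N → Ω → ℝ)
    (g : Fin N → Ω → EuclideanSpace ℝ (Fin d))
    (z : Ω → EuclideanSpace ℝ (Fin d))
    (hχmeas : ∀ m, Measurable (χ m))
    (hχval : ∀ m, ∀ᵐ ω ∂P, χ m ω = 0 ∨ χ m ω = 1)
    (hχprob : ∀ m, P {ω | χ m ω = 1} = ENNReal.ofReal (q m))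
    (hgmeas : ∀ m, AEStronglyMeasurable (g m) P)
    (hgbdd : ∀ m, ∀ᵐ ω ∂P, ‖g m ω‖ ≤ G)
    (hgmean : ∀ m, ∫ ω, g m ω ∂P = gradient (f m) w)
    (hgvar : ∀ m, ∫ ω, ‖g m ω - gradient (f m) w‖ ^ 2 ∂P ≤ σ m ^ 2)
    (hz2 : MemLp z 2 P)
    (hzmean : ∫ ω, z ω ∂P = 0)
    (hzvar : ∫ ω, ‖z ω‖ ^ 2 ∂P = d * N₀)
    (hindep : iIndepFun (m := otaMS d N) (otaFamily χ g z) P)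
    -- definitions of the design quantities
    (αm : Fin N → ℝ) (hαm : ∀ m, αm m = q m * γ m)
    (α : ℝ)
    (p : Fin N → ℝ) (hp : ∀ m, p m = αm m / α)
    (ghat : Ω → EuclideanSpace ℝ (Fin d))
    (hghat : ghat = fun ω => (1 / α) • ∑ m, (χ m ω * γ m) • g m ω + (1 / α) • z ω) :
    ∫ ω, ‖ghat ω - ∑ m, p m • gradient (f m) w‖ ^ 2 ∂P ≤
      (∑ m, p m ^ 2 * G ^ 2 * (γ m / αm m - 1))
        + (∑ m, p m ^ 2 * σ m ^ 2) + d * N₀ / α ^ 2 := by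
  simp_rw [← hgmean] at hgvar ⊢
  have hq0 (m : Fin N) : 0 < q m := (hq m).1
  have hχmean (m : Fin N) : P[χ m] = q m := by
    rw [integral_eq_measureReal_of_ae_eq_zero_or_one (hχmeas m) (hχval m), measureReal_def,
      hχprob m, ENNReal.toReal_ofReal (hq0 m).le]
  have hgL2 (m : Fin N) : MemLp (g m) 2 P := MemLp.of_bound (hgmeas m) G (hgbdd m)
  have hdecomp (ω : Ω) : ghat ω - ∑ m, p m • P[g m]
      = α⁻¹ • (∑ m, γ m • (χ m ω • g m ω - q m • P[g m]) + z ω) := by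
    simp only [hghat, hp, hαm, one_div, smul_add, smul_sub, Finset.smul_sum, smul_smul,
      Finset.sum_sub_distrib]
    simp only [mul_comm (χ _ ω), mul_comm (q _), div_eq_inv_mul]
    abel
  have hdevice (m : Fin N) : ∫ ω, ‖χ m ω • g m ω - q m • P[g m]‖ ^ 2 ∂P
      ≤ q m ^ 2 * σ m ^ 2 + q m * (1 - q m) * G ^ 2 :=
    integral_norm_smul_sub_sq_le_of_indepFun (hχmeas m).aestronglyMeasurable (hχval m)
      (hχmean m) (hq0 m).le (hq m).2 (hgL2 m) (indepFun_of_iIndepFun_otaFamily hindep m)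
      (hgvar m) (hgbdd m)
  have hterm (m : Fin N) : (α⁻¹) ^ 2 * (γ m ^ 2 * (q m ^ 2 * σ m ^ 2 + q m * (1 - q m) * G ^ 2))
      = p m ^ 2 * G ^ 2 * (γ m / αm m - 1) + p m ^ 2 * σ m ^ 2 := by
    rw [hp, hαm]
    field_simp [(hq0 m).ne', (hγ m).ne']
    ring
  calc ∫ ω, ‖ghat ω - ∑ m, p m • P[g m]‖ ^ 2 ∂P
      = (α⁻¹) ^ 2 * (∑ m, γ m ^ 2 * ∫ ω, ‖χ m ω • g m ω - q m • P[g m]‖ ^ 2 ∂P + d * N₀) := by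
        simp_rw [hdecomp, norm_smul, mul_pow, Real.norm_eq_abs, sq_abs]
        rw [integral_const_mul, integral_norm_sq_aggregate_of_iIndepFun_otaFamily hindep
          (fun m => (hχmeas m).aemeasurable) hχval hχmean hgL2 hz2 hzmean γ, hzvar]
    _ ≤ (α⁻¹) ^ 2 * (∑ m, γ m ^ 2 * (q m ^ 2 * σ m ^ 2 + q m * (1 - q m) * G ^ 2) + d * N₀) := by
        gcongr with m
        exact hdevice m
    _ = _ := by
        rw [mul_add, Finset.mul_sum, Finset.sum_congr rfl fun m _ => hterm m,
          Finset.sum_add_distrib, div_eq_mul_inv _ (α ^ 2), inv_pow, mul_comm]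

/-- OTA-FL gradient estimation variance bound (Lemma 1). -/
theorem ota_fl_variance_bound
    {d N : ℕ}
    (w : EuclideanSpace ℝ (Fin d))
    (f : Fin N → EuclideanSpace ℝ (Fin d) → ℝ)
    (hdiff : ∀ m x, DifferentiableAt ℝ (f m) x)
    (G N₀ : ℝ) (hG : 0 < G) (hN₀ : 0 < N₀)
    (γ : Fin N → ℝ) (hγ : ∀ m, 0 < γ m)
    (q : Fin N → ℝ) (hq : ∀ m, q m ∈ Set.Ioc (0 : ℝ) 1)
    (σ : Fin N → ℝ)
    {Ω : Type*} [MeasurableSpace Ω] (P : Measure Ω) [IsProbabilityMeasure P]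
    (χ : Fin N → Ω → ℝ)
    (g : Fin N → Ω → EuclideanSpace ℝ (Fin d))
    (z : Ω → EuclideanSpace ℝ (Fin d))
    (hχmeas : ∀ m, Measurable (χ m))
    (hχval : ∀ m, ∀ᵐ ω ∂P, χ m ω = 0 ∨ χ m ω = 1)
    (hχprob : ∀ m, P {ω | χ m ω = 1} = ENNReal.ofReal (q m))
    (hgmeas : ∀ m, AEStronglyMeasurable (g m) P)
    (hgbdd : ∀ m, ∀ᵐ ω ∂P, ‖g m ω‖ ≤ G)
    (hgmean : ∀ m, ∫ ω, g m ω ∂P = gradient (f m) w)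
    (hgvar : ∀ m, ∫ ω, ‖g m ω - gradient (f m) w‖ ^ 2 ∂P ≤ σ m ^ 2)
    (hz2 : MemLp z 2 P)
    (hzmean : ∫ ω, z ω ∂P = 0)
    (hzvar : ∫ ω, ‖z ω‖ ^ 2 ∂P = d * N₀)
    (hindep : iIndepFun (m := otaMS d N) (otaFamily χ g z) P)
    -- definitions of the design quantities
    (αm : Fin N → ℝ) (hαm : ∀ m, αm m = q m * γ m)
    (α : ℝ) (hα : α = ∑ m, αm m)
    (p : Fin N → ℝ) (hp : ∀ m, p m = αm m / α)
    (ghat : Ω → EuclideanSpace ℝ (Fin d))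
    (hghat : ghat = fun ω => (1 / α) • ∑ m, (χ m ω * γ m) • g m ω + (1 / α) • z ω) :
    ∫ ω, ‖ghat ω - ∑ m, p m • gradient (f m) w‖ ^ 2 ∂P ≤
      (∑ m, p m ^ 2 * G ^ 2 * (γ m / αm m - 1))
        + (∑ m, p m ^ 2 * σ m ^ 2) + d * N₀ / α ^ 2 :=
  ota_fl_variance_bound_general w f G N₀ γ hγ q hq σ P χ g z hχmeas hχval hχprob hgmeas hgbdd hgmean
    hgvar hz2 hzmean hzvar hindep αm hαm α p hp ghat hghat
end

section
/- (Model bias bound.) Let f_1, ..., f_N : ℝ^d → ℝ be differentiable and μ-strongly convex (μ > 0), let p_1, ..., p_N be nonnegative weights summing to 1, let F(w) = (1/N)·Σ_{m=1}^N f_m(w) and F̃(w) = Σ_{m=1}^N p_m f_m(w), and let w* and w̃ satisfy ∇F(w*) = 0 and ∇F̃(w̃) = 0 respectively. Set κ² = (1/N)·Σ_{m=1}^N ‖∇f_m(w*)‖². Then ‖w̃ − w*‖² ≤ (N·κ²/μ²)·Σ_{m=1}^N (p_m − 1/N)². -/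
open scoped RealInnerProductSpace BigOperators

lemma grad_wsum {d N : ℕ} (f : Fin N → EuclideanSpace ℝ (Fin d) → ℝ)
    (hdiff : ∀ m x, DifferentiableAt ℝ (f m) x) (c : Fin N → ℝ)
    (x : EuclideanSpace ℝ (Fin d)) :
    gradient (fun w => ∑ m, c m * f m w) x = ∑ m, c m • gradient (f m) x := by
  have h1 : fderiv ℝ (fun w => ∑ m, c m * f m w) x
      = ∑ m, c m • fderiv ℝ (f m) x := by
    rw [fderiv_fun_sum (fun m _ => (hdiff m x).const_mul (c m))]
    exact Finset.sum_congr rfl fun m _ => fderiv_const_mul (hdiff m x) (c m)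
  simp only [gradient, h1, map_sum, map_smul]

/-- Model bias bound: distance between the biased minimizer and the global minimizer. -/
theorem model_bias_bound
    {d N : ℕ}
    (f : Fin N → EuclideanSpace ℝ (Fin d) → ℝ)
    (μ : ℝ) (hμ : 0 < μ)
    (hdiff : ∀ m x, DifferentiableAt ℝ (f m) x)
    (hsc : ∀ m (x y : EuclideanSpace ℝ (Fin d)),
      f m y ≥ f m x + ⟪gradient (f m) x, y - x⟫ + μ / 2 * ‖y - x‖ ^ 2)
    (p : Fin N → ℝ) (hp : ∀ m, 0 ≤ p m) (hpsum : ∑ m, p m = 1)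
    (F : EuclideanSpace ℝ (Fin d) → ℝ)
    (hF : F = fun w => (1 / N : ℝ) * ∑ m, f m w)
    (Ftil : EuclideanSpace ℝ (Fin d) → ℝ)
    (hFtil : Ftil = fun w => ∑ m, p m * f m w)
    (wstar : EuclideanSpace ℝ (Fin d)) (hwstar : gradient F wstar = 0)
    (wtil : EuclideanSpace ℝ (Fin d)) (hwtil : gradient Ftil wtil = 0)
    (κsq : ℝ)
    (hκ : κsq = (1 / N : ℝ) * ∑ m, ‖gradient (f m) wstar‖ ^ 2) :
    ‖wtil - wstar‖ ^ 2 ≤ N * κsq / μ ^ 2 * ∑ m, (p m - 1 / N) ^ 2 := by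
  have hN : 0 < (N : ℝ) := by
    rcases Nat.eq_zero_or_pos N with h | h
    · subst h; simp at hpsum
    · exact_mod_cast h
  set g : Fin N → EuclideanSpace ℝ (Fin d) := fun m => gradient (f m) wstar with hg
  set c : Fin N → ℝ := fun m => p m - 1 / N with hc
  -- gradient of Ftil at any point
  have hgradFtil : ∀ x, gradient Ftil x = ∑ m, p m • gradient (f m) x := by
    intro x; rw [hFtil]; exact grad_wsum f hdiff p x
  -- sum of gradients at wstar is zero
  have hsum0 : ∑ m, g m = 0 := by
    have h1 : gradient F wstar = (1 / N : ℝ) • ∑ m, g m := by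
      have : F = fun w => ∑ m, (1 / N : ℝ) * f m w := by
        rw [hF]; funext w; rw [Finset.mul_sum]
      rw [this, grad_wsum f hdiff (fun _ => (1 / N : ℝ)) wstar, Finset.smul_sum]
    rw [h1] at hwstar
    have : (1 / N : ℝ) ≠ 0 := by positivity
    exact (smul_eq_zero.mp hwstar).resolve_left this
  have hgrad_star : gradient Ftil wstar = ∑ m, c m • g m := by
    rw [hgradFtil]
    have : ∑ m, c m • g m = ∑ m, p m • g m - ∑ m, (1 / N : ℝ) • g m := by
      rw [← Finset.sum_sub_distrib]
      exact Finset.sum_congr rfl fun m _ => (sub_smul _ _ _)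
    rw [this, ← Finset.smul_sum, hsum0, smul_zero, sub_zero]
  -- weighted strong convexity of Ftil
  have key : ∀ x y, Ftil x + ⟪gradient Ftil x, y - x⟫ + μ / 2 * ‖y - x‖ ^ 2 ≤ Ftil y := by
    intro x y
    have h1 : ∑ m, p m * (f m x + ⟪gradient (f m) x, y - x⟫ + μ / 2 * ‖y - x‖ ^ 2)
        ≤ ∑ m, p m * f m y :=
      Finset.sum_le_sum fun m _ => mul_le_mul_of_nonneg_left (hsc m x y) (hp m)
    have hin : ⟪gradient Ftil x, y - x⟫ = ∑ m, p m * ⟪gradient (f m) x, y - x⟫ := by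
      rw [hgradFtil x, sum_inner]
      exact Finset.sum_congr rfl fun m _ => real_inner_smul_left _ _ _
    calc Ftil x + ⟪gradient Ftil x, y - x⟫ + μ / 2 * ‖y - x‖ ^ 2
        = ∑ m, p m * (f m x + ⟪gradient (f m) x, y - x⟫ + μ / 2 * ‖y - x‖ ^ 2) := by
          rw [hin]
          simp only [hFtil, mul_add, Finset.sum_add_distrib, ← Finset.sum_mul, hpsum, one_mul]
      _ ≤ ∑ m, p m * f m y := h1
      _ = Ftil y := by rw [hFtil]
  set Δ := wtil - wstar with hΔ
  have h1 := key wtil wstar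
  have h2 := key wstar wtil
  rw [hwtil, inner_zero_left, norm_sub_rev] at h1
  have hadd : ⟪gradient Ftil wstar, Δ⟫ + μ * ‖Δ‖ ^ 2 ≤ 0 := by
    linarith
  have hcs : μ * ‖Δ‖ ^ 2 ≤ ‖gradient Ftil wstar‖ * ‖Δ‖ := by
    have := abs_real_inner_le_norm (gradient Ftil wstar) Δ
    have := neg_abs_le ⟪gradient Ftil wstar, Δ⟫
    nlinarith
  have hmu : μ * ‖Δ‖ ≤ ‖gradient Ftil wstar‖ := by
    rcases eq_or_lt_of_le (norm_nonneg Δ) with h | h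
    · rw [← h]; simpa using norm_nonneg _
    · nlinarith
  -- Cauchy-Schwarz bound on ‖gradient Ftil wstar‖²
  have hgn : ‖gradient Ftil wstar‖ ≤ ∑ m, |c m| * ‖g m‖ := by
    rw [hgrad_star]
    calc ‖∑ m, c m • g m‖ ≤ ∑ m, ‖c m • g m‖ := norm_sum_le _ _
      _ = ∑ m, |c m| * ‖g m‖ := by simp [norm_smul]
  have hcs2 : (∑ m, |c m| * ‖g m‖) ^ 2 ≤ (∑ m, (c m) ^ 2) * ∑ m, ‖g m‖ ^ 2 := by
    have h := Finset.sum_mul_sq_le_sq_mul_sq Finset.univ (fun m => |c m|) (fun m => ‖g m‖)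
    simpa [sq_abs] using h
  have hNk : ∑ m, ‖g m‖ ^ 2 = N * κsq := by
    rw [hκ, ← mul_assoc, mul_one_div_cancel hN.ne', one_mul]
  have hb : ‖gradient Ftil wstar‖ ^ 2 ≤ N * κsq * ∑ m, (c m) ^ 2 := by
    calc ‖gradient Ftil wstar‖ ^ 2 ≤ (∑ m, |c m| * ‖g m‖) ^ 2 :=
          pow_le_pow_left₀ (norm_nonneg _) hgn 2
      _ ≤ (∑ m, (c m) ^ 2) * ∑ m, ‖g m‖ ^ 2 := hcs2
      _ = N * κsq * ∑ m, (c m) ^ 2 := by rw [hNk]; ring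
  have final : μ ^ 2 * ‖Δ‖ ^ 2 ≤ N * κsq * ∑ m, (c m) ^ 2 := by
    calc μ ^ 2 * ‖Δ‖ ^ 2 = (μ * ‖Δ‖) ^ 2 := by ring
      _ ≤ ‖gradient Ftil wstar‖ ^ 2 := pow_le_pow_left₀ (by positivity) hmu 2
      _ ≤ N * κsq * ∑ m, (c m) ^ 2 := hb
  rw [div_mul_eq_mul_div, le_div_iff₀ (by positivity : (0:ℝ) < μ ^ 2)]
  calc ‖Δ‖ ^ 2 * μ ^ 2 = μ ^ 2 * ‖Δ‖ ^ 2 := by ring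
    _ ≤ N * κsq * ∑ m, (c m) ^ 2 := final
    _ = N * κsq * ∑ m, (p m - 1 / N) ^ 2 := rfl
end

section
/- (Gradient-descent contraction step.) Let f : ℝ^d → ℝ be differentiable, μ-strongly convex, and L-smooth with 0 < μ ≤ L, and let η ∈ [0, 2/(μ + L)]. Then for all x, y ∈ ℝ^d, ‖(x − y) − η·(∇f(x) − ∇f(y))‖ ≤ (1 − ημ)·‖x − y‖. -/
/-!
Set `h := f - (μ/2)‖·‖²`, whose gradient is `g := ∇f - μ • id`. Strong convexity of `f` makes `h`
convex, and the descent lemma for the `L`-Lipschitz `∇f` gives `h` a quadratic upper bound with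
constant `L - μ`. A convex function with such an upper bound has a co-coercive gradient:
`‖g x - g y‖² ≤ (L - μ) ⟪g x - g y, x - y⟫`. Writing the step as
`(1 - ημ)(x - y) - η (g x - g y)` and expanding the square, the cross term absorbs the
`η²‖g x - g y‖²` term exactly when `η (μ + L) ≤ 2`.
-/

open scoped RealInnerProductSpace
open Filter Set Topology

section InnerProductSpace

variable {F : Type*} [NormedAddCommGroup F] [InnerProductSpace ℝ F]

lemma inner_sub_sub_eq_gap_add_gap (h : F → ℝ) (g : F → F) (x y : F) :
    ⟪g x - g y, x - y⟫ = (h y - h x - ⟪g x, y - x⟫) + (h x - h y - ⟪g y, x - y⟫) := by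
  rw [inner_sub_left, ← neg_sub y x, inner_neg_right]
  ring

lemma inner_sub_sub_nonneg {h : F → ℝ} {g : F → F}
    (hlow : ∀ x y, h x + ⟪g x, y - x⟫ ≤ h y) (x y : F) : 0 ≤ ⟪g x - g y, x - y⟫ := by
  rw [inner_sub_sub_eq_gap_add_gap h g x y]
  linarith [hlow x y, hlow y x]

lemma sq_norm_sub_le_two_mul_gap {h : F → ℝ} {g : F → F} {C : ℝ} (hC : 0 < C)
    (hlow : ∀ x y, h x + ⟪g x, y - x⟫ ≤ h y)
    (hup : ∀ x y, h y ≤ h x + ⟪g x, y - x⟫ + C / 2 * ‖y - x‖ ^ 2) (x y : F) :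
    ‖g x - g y‖ ^ 2 ≤ 2 * C * (h y - h x - ⟪g x, y - x⟫) := by
  set a := g x - g y
  -- compare the lower bound at `x` with the upper bound at `y`, both taken at `y + C⁻¹ • a`
  have hx := hlow x (y + C⁻¹ • a)
  have hy := hup y (y + C⁻¹ • a)
  rw [show y + C⁻¹ • a - x = (y - x) + C⁻¹ • a by abel, inner_add_right,
    real_inner_smul_right] at hx
  rw [add_sub_cancel_left, real_inner_smul_right, norm_smul,
    Real.norm_of_nonneg (inv_nonneg.2 hC.le)] at hy
  have ha : C⁻¹ * ⟪g x, a⟫ - C⁻¹ * ⟪g y, a⟫ = C⁻¹ * ‖a‖ ^ 2 := by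
    rw [← mul_sub, ← inner_sub_left, real_inner_self_eq_norm_sq]
  have hq : C / 2 * (C⁻¹ * ‖a‖) ^ 2 = C⁻¹ * ‖a‖ ^ 2 / 2 := by field_simp
  have hgap : C⁻¹ * ‖a‖ ^ 2 / 2 ≤ h y - h x - ⟪g x, y - x⟫ := by linarith
  calc ‖a‖ ^ 2 = 2 * C * (C⁻¹ * ‖a‖ ^ 2 / 2) := by field_simp
    _ ≤ _ := by gcongr

lemma sq_norm_sub_le_mul_inner_sub {h : F → ℝ} {g : F → F} {C : ℝ} (hC : 0 ≤ C)
    (hlow : ∀ x y, h x + ⟪g x, y - x⟫ ≤ h y)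
    (hup : ∀ x y, h y ≤ h x + ⟪g x, y - x⟫ + C / 2 * ‖y - x‖ ^ 2) (x y : F) :
    ‖g x - g y‖ ^ 2 ≤ C * ⟪g x - g y, x - y⟫ := by
  have hε : ∀ ε ∈ Ioi (0 : ℝ), ‖g x - g y‖ ^ 2 ≤ (C + ε) * ⟪g x - g y, x - y⟫ := by
    intro ε (hε : 0 < ε)
    have hup' : ∀ x y, h y ≤ h x + ⟪g x, y - x⟫ + (C + ε) / 2 * ‖y - x‖ ^ 2 := fun x y => by
      nlinarith [hup x y, sq_nonneg ‖y - x‖]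
    have hxy := sq_norm_sub_le_two_mul_gap (by positivity) hlow hup' x y
    have hyx := sq_norm_sub_le_two_mul_gap (by positivity) hlow hup' y x
    rw [norm_sub_rev] at hyx
    rw [inner_sub_sub_eq_gap_add_gap h g x y]
    linarith
  have hlim : Tendsto (fun ε => (C + ε) * ⟪g x - g y, x - y⟫) (𝓝[>] 0)
      (𝓝 (C * ⟪g x - g y, x - y⟫)) := by
    have hcont : Continuous fun ε => (C + ε) * ⟪g x - g y, x - y⟫ := by fun_prop
    simpa using tendsto_nhdsWithin_of_tendsto_nhds (hcont.tendsto 0)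
  exact ge_of_tendsto hlim (eventually_nhdsWithin_of_forall hε)

lemma norm_one_sub_mul_smul_sub_smul_le {z w : F} {μ L η : ℝ} (hμL : μ ≤ L) (hη : 0 ≤ η)
    (hηL : η * (μ + L) ≤ 2) (hs : 0 ≤ ⟪w, z⟫) (hw : ‖w‖ ^ 2 ≤ (L - μ) * ⟪w, z⟫) :
    ‖(1 - η * μ) • z - η • w‖ ≤ (1 - η * μ) * ‖z‖ := by
  have hημ : 0 ≤ 1 - η * μ := by nlinarith
  refine (pow_le_pow_iff_left₀ (norm_nonneg _) (by positivity) two_ne_zero).mp ?_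
  rw [norm_sub_sq_real, real_inner_smul_left, real_inner_smul_right, norm_smul, norm_smul,
    Real.norm_of_nonneg hημ, Real.norm_of_nonneg hη, real_inner_comm]
  nlinarith [mul_nonneg (mul_nonneg hη (sub_nonneg.2 hηL)) hs,
    mul_le_mul_of_nonneg_left hw (sq_nonneg η)]

lemma sub_half_mul_sq_norm_gap (f : F → ℝ) (g : F → F) (μ : ℝ) (x y : F) :
    (f y - μ / 2 * ‖y‖ ^ 2) - (f x - μ / 2 * ‖x‖ ^ 2) - ⟪g x - μ • x, y - x⟫
      = f y - f x - ⟪g x, y - x⟫ - μ / 2 * ‖y - x‖ ^ 2 := by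
  simp only [norm_sub_sq_real, inner_sub_left, inner_sub_right, real_inner_smul_left,
    real_inner_self_eq_norm_sq, real_inner_comm x y]
  ring

variable [CompleteSpace F]

lemma DifferentiableAt.hasDerivAt_comp_add_smul {f : F → ℝ} {x v : F} {t : ℝ}
    (hf : DifferentiableAt ℝ f (x + t • v)) :
    HasDerivAt (fun s : ℝ => f (x + s • v)) ⟪gradient f (x + t • v), v⟫ t := by
  have hline : HasDerivAt (fun s : ℝ => x + s • v) v t := by
    simpa using ((hasDerivAt_id t).smul_const v).const_add x
  simpa [Function.comp_def] using
    (hasGradientAt_iff_hasFDerivAt.mp hf.hasGradientAt).comp_hasDerivAt t hline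

lemma le_add_inner_gradient_add_half_mul_sq {f : F → ℝ} {L : ℝ}
    (hf : ∀ x, DifferentiableAt ℝ f x)
    (hL : ∀ x y, ‖gradient f x - gradient f y‖ ≤ L * ‖x - y‖) (x y : F) :
    f y ≤ f x + ⟪gradient f x, y - x⟫ + L / 2 * ‖y - x‖ ^ 2 := by
  set v := y - x
  have hφ (t : ℝ) := (hf (x + t • v)).hasDerivAt_comp_add_smul
  have hB (t : ℝ) : HasDerivAt (fun s => f x + s * ⟪gradient f x, v⟫ + L / 2 * ‖v‖ ^ 2 * s ^ 2)
      (⟪gradient f x, v⟫ + L * ‖v‖ ^ 2 * t) t := by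
    refine ((((hasDerivAt_id t).mul_const _).const_add (f x)).add
      ((hasDerivAt_pow 2 t).const_mul (L / 2 * ‖v‖ ^ 2))).congr_deriv ?_
    norm_num
    ring
  have hslope {t : ℝ} (ht : 0 ≤ t) :
      ⟪gradient f (x + t • v), v⟫ ≤ ⟪gradient f x, v⟫ + L * ‖v‖ ^ 2 * t := by
    have hLt := hL (x + t • v) x
    rw [add_sub_cancel_left, norm_smul, Real.norm_of_nonneg ht] at hLt
    have hcs := real_inner_le_norm (gradient f (x + t • v) - gradient f x) v
    rw [inner_sub_left] at hcs
    nlinarith [norm_nonneg v]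
  have hbound := image_le_of_deriv_right_le_deriv_boundary
    (fun t _ => (hφ t).continuousAt.continuousWithinAt) (fun t _ => (hφ t).hasDerivWithinAt)
    (by simp) (fun t _ => (hB t).continuousAt.continuousWithinAt)
    (fun t _ => (hB t).hasDerivWithinAt) (fun t ht => hslope ht.1) (right_mem_Icc.2 zero_le_one)
  simpa [v] using hbound

end InnerProductSpace

/-- Gradient-descent contraction step for a μ-strongly convex, L-smooth function
with step size η ∈ [0, 2/(μ+L)]. -/
theorem gradient_descent_contraction
    {d : ℕ}
    (f : EuclideanSpace ℝ (Fin d) → ℝ)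
    (μ L : ℝ) (hμ : 0 < μ) (hμL : μ ≤ L)
    (hdiff : ∀ x, DifferentiableAt ℝ f x)
    (hsc : ∀ x y : EuclideanSpace ℝ (Fin d),
      f y ≥ f x + ⟪gradient f x, y - x⟫ + μ / 2 * ‖y - x‖ ^ 2)
    (hsmooth : ∀ x y : EuclideanSpace ℝ (Fin d),
      ‖gradient f x - gradient f y‖ ≤ L * ‖x - y‖)
    (η : ℝ) (hη : η ∈ Set.Icc (0 : ℝ) (2 / (μ + L))) :
    ∀ x y : EuclideanSpace ℝ (Fin d),
      ‖(x - y) - η • (gradient f x - gradient f y)‖ ≤ (1 - η * μ) * ‖x - y‖ := by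
  intro x y
  set h := fun p => f p - μ / 2 * ‖p‖ ^ 2
  set g := fun p => gradient f p - μ • p
  have hlow : ∀ p q, h p + ⟪g p, q - p⟫ ≤ h q := fun p q => by
    simp only [h, g]
    linarith [hsc p q, sub_half_mul_sq_norm_gap f (gradient f) μ p q]
  have hup : ∀ p q, h q ≤ h p + ⟪g p, q - p⟫ + (L - μ) / 2 * ‖q - p‖ ^ 2 := fun p q => by
    simp only [h, g]
    linarith [le_add_inner_gradient_add_half_mul_sq hdiff hsmooth p q,
      sub_half_mul_sq_norm_gap f (gradient f) μ p q]
  have hstep : (x - y) - η • (gradient f x - gradient f y)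
      = (1 - η * μ) • (x - y) - η • (g x - g y) := by
    simp only [g]
    module
  rw [hstep]
  exact norm_one_sub_mul_smul_sub_smul_le hμL hη.1 ((le_div_iff₀ (by linarith)).mp hη.2)
    (inner_sub_sub_nonneg hlow x y) (sq_norm_sub_le_mul_inner_sub (by linarith) hlow hup x y)
end
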